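/- arXiv:2310.19781 — 5 statements merged into one kernel-verified Lean document; each statement's English description precedes it below -/
import Mathlib

section
/- Let r ≥ 0 be real and let M ≥ 1 be an integer. Then (π/2) e^{-4r} c_1^{(M)} ≤ ∫₀^∞ (1 + e^{8r} γ²)^{-M} · (γ²/(1+γ²)) · γ^{-2} dγ ≤ (π/2) e^{-4r} c_1^{(M-1)}, where c_1^{(j)} := (2/π) ∫₀^∞ (1+γ²)^{-j-1} dγ. -/
open Real MeasureTheory Set

noncomputable def c1j (j : ℕ) : ℝ :=
  (2 / π) * ∫ γ in Ioi (0 : ℝ), 1 / (1 + γ ^ 2) ^ (j + 1)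

lemma aux_int_pow (k : ℕ) (hk : 1 ≤ k) :
    IntegrableOn (fun u : ℝ => 1 / (1 + u ^ 2) ^ k) (Ioi (0:ℝ)) := by
  apply (integrable_inv_one_add_sq.mono ?_ ?_).integrableOn
  · apply Measurable.aestronglyMeasurable; measurability
  · filter_upwards with u
    have h1 : (1:ℝ) ≤ 1 + u ^ 2 := by nlinarith [sq_nonneg u]
    have h2 : (1 + u^2) ≤ (1 + u^2)^k := le_self_pow₀ (by linarith) (by omega)
    rw [Real.norm_eq_abs, Real.norm_eq_abs, abs_of_nonneg (by positivity),
      abs_of_nonneg (by positivity), one_div]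
    exact inv_anti₀ (by linarith) h2

lemma aux_int_g (M : ℕ) (hM : 1 ≤ M) (c : ℝ) (hc : 0 ≤ c) :
    IntegrableOn (fun u : ℝ => 1 / ((1 + u ^ 2) ^ M * (1 + c * u ^ 2))) (Ioi (0:ℝ)) := by
  apply (integrable_inv_one_add_sq.mono ?_ ?_).integrableOn
  · apply Measurable.aestronglyMeasurable; measurability
  · filter_upwards with u
    have h1 : (1:ℝ) ≤ 1 + u ^ 2 := by nlinarith [sq_nonneg u]
    have h2 : (1 + u^2) ≤ (1 + u^2)^M := le_self_pow₀ (by linarith) (by omega)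
    have h3 : (1:ℝ) ≤ 1 + c * u ^ 2 := by nlinarith [sq_nonneg u]
    have h4 : (1 + u^2) ≤ (1 + u^2)^M * (1 + c * u^2) := by nlinarith
    rw [Real.norm_eq_abs, Real.norm_eq_abs, abs_of_nonneg (by positivity),
      abs_of_nonneg (by positivity), one_div]
    exact inv_anti₀ (by linarith) h4

theorem eta_M_one_bounds (r : ℝ) (hr : 0 ≤ r) (M : ℕ) (hM : 1 ≤ M) :
    (π / 2) * Real.exp (-4 * r) * c1j M ≤
      (∫ γ in Ioi (0 : ℝ),
        (1 + Real.exp (8 * r) * γ ^ 2) ^ (-(M : ℤ)) * (γ ^ 2 / (1 + γ ^ 2)) / γ ^ 2) ∧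
    (∫ γ in Ioi (0 : ℝ),
        (1 + Real.exp (8 * r) * γ ^ 2) ^ (-(M : ℤ)) * (γ ^ 2 / (1 + γ ^ 2)) / γ ^ 2) ≤
      (π / 2) * Real.exp (-4 * r) * c1j (M - 1) := by
  set c : ℝ := Real.exp (-(8 * r)) with hc
  have hc0 : 0 ≤ c := (Real.exp_pos _).le
  have hc1 : c ≤ 1 := Real.exp_le_one_iff.mpr (by linarith)
  set g : ℝ → ℝ := fun u => 1 / ((1 + u ^ 2) ^ M * (1 + c * u ^ 2)) with hg
  set E : ℝ := Real.exp (4 * r) with hE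
  have hE0 : 0 < E := Real.exp_pos _
  have hE2 : E ^ 2 = Real.exp (8 * r) := by
    rw [hE, ← Real.exp_nat_mul]; norm_num; ring_nf
  -- Step 1: the integrand equals g (E * γ) on Ioi 0
  have hcong : (∫ γ in Ioi (0 : ℝ),
        (1 + Real.exp (8 * r) * γ ^ 2) ^ (-(M : ℤ)) * (γ ^ 2 / (1 + γ ^ 2)) / γ ^ 2)
      = ∫ γ in Ioi (0 : ℝ), g (E * γ) := by
    apply setIntegral_congr_fun (measurableSet_Ioi)
    intro γ hγ
    have hγ0 : (0:ℝ) < γ := hγ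
    have hA : (0:ℝ) < 1 + Real.exp (8 * r) * γ ^ 2 := by positivity
    have hB : (0:ℝ) < 1 + γ ^ 2 := by positivity
    have hce : c * Real.exp (8 * r) = 1 := by
      rw [hc, ← Real.exp_add]; norm_num
    simp only [hg, mul_pow, hE2]
    have : c * (Real.exp (8 * r) * γ ^ 2) = γ ^ 2 := by
      rw [← mul_assoc, hce, one_mul]
    rw [this, zpow_neg, zpow_natCast]
    field_simp
  -- Step 2: substitution
  have hsub : (∫ γ in Ioi (0 : ℝ), g (E * γ)) = E⁻¹ * ∫ u in Ioi (0 : ℝ), g u := by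
    have := MeasureTheory.integral_comp_mul_left_Ioi g 0 hE0
    simpa [mul_zero, smul_eq_mul] using this
  have hEinv : E⁻¹ = Real.exp (-4 * r) := by
    rw [hE, ← Real.exp_neg]; ring_nf
  rw [hcong, hsub, hEinv]
  have hπ : (π / 2) * (2 / π) = 1 := by
    field_simp
  -- lower bound core
  have hlow : (∫ u in Ioi (0:ℝ), 1 / (1 + u ^ 2) ^ (M + 1)) ≤ ∫ u in Ioi (0:ℝ), g u := by
    apply setIntegral_mono_on (aux_int_pow (M+1) (by omega)) (aux_int_g M hM c hc0)
      measurableSet_Ioi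
    intro u hu
    have h1 : (0:ℝ) < 1 + u ^ 2 := by positivity
    have h3 : (0:ℝ) < 1 + c * u ^ 2 := by positivity
    have : (1 + u^2)^M * (1 + c * u^2) ≤ (1 + u^2)^(M+1) := by
      rw [pow_succ]
      have : 1 + c * u ^ 2 ≤ 1 + u ^ 2 := by nlinarith [sq_nonneg u]
      exact mul_le_mul_of_nonneg_left this (by positivity)
    simp only [hg, one_div]
    exact inv_anti₀ (by positivity) this
  have hup : (∫ u in Ioi (0:ℝ), g u) ≤ ∫ u in Ioi (0:ℝ), 1 / (1 + u ^ 2) ^ M := by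
    apply setIntegral_mono_on (aux_int_g M hM c hc0) (aux_int_pow M hM)
      measurableSet_Ioi
    intro u hu
    have h1 : (0:ℝ) < 1 + u ^ 2 := by positivity
    have : (1 + u^2)^M ≤ (1 + u^2)^M * (1 + c * u^2) := by nlinarith [mul_nonneg hc0 (sq_nonneg u), pow_pos h1 M]
    simp only [hg, one_div]
    exact inv_anti₀ (by positivity) this
  constructor
  · have : (π / 2) * Real.exp (-4 * r) * c1j M
        = Real.exp (-4 * r) * ∫ u in Ioi (0:ℝ), 1 / (1 + u ^ 2) ^ (M + 1) := by
      rw [c1j]; field_simp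
    rw [this]
    exact mul_le_mul_of_nonneg_left hlow (Real.exp_pos _).le
  · have hM1 : M - 1 + 1 = M := Nat.succ_pred_eq_of_pos hM
    have : (π / 2) * Real.exp (-4 * r) * c1j (M - 1)
        = Real.exp (-4 * r) * ∫ u in Ioi (0:ℝ), 1 / (1 + u ^ 2) ^ M := by
      rw [c1j, hM1]; field_simp
    rw [this]
    exact mul_le_mul_of_nonneg_left hup (Real.exp_pos _).le
end

section
/- Let M, N be positive integers with M > N and r ≥ 0. Then ∫₀^∞ (1 + e^{8r}γ²)^{-M} (γ²/(1+γ²))^N γ^{-2} dγ ≤ e^{-8r(N-1) - 4r} · (π/2) · c_N^{(M-N)} + e^{-8Mr}/(2M - 1), where c_N^{(M-N)} = (2/π) ∫₀^∞ γ^{2N-2}/(1+γ²)^M dγ. -/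
open Real MeasureTheory Set

set_option maxHeartbeats 2000000 in
theorem eta_upper_bound (M N : ℕ) (hN : 1 ≤ N) (hMN : N < M) (r : ℝ) (hr : 0 ≤ r) :
    (∫ γ in Ioi (0 : ℝ),
        (1 + Real.exp (8 * r) * γ ^ 2) ^ (-(M : ℤ)) * (γ ^ 2 / (1 + γ ^ 2)) ^ N / γ ^ 2)
      ≤ Real.exp (-8 * r * ((N : ℝ) - 1) - 4 * r) * (π / 2) *
          ((2 / π) * ∫ γ in Ioi (0 : ℝ), γ ^ (2 * N - 2) / (1 + γ ^ 2) ^ M)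
        + Real.exp (-8 * M * r) / (2 * (M : ℝ) - 1) := by
  have hc : (0:ℝ) < Real.exp (4 * r) := Real.exp_pos _
  set c : ℝ := Real.exp (4 * r) with hcdef
  have hc1 : (1:ℝ) ≤ c := Real.one_le_exp (by linarith)
  set f : ℝ → ℝ := fun γ =>
    (1 + Real.exp (8 * r) * γ ^ 2) ^ (-(M : ℤ)) * (γ ^ 2 / (1 + γ ^ 2)) ^ N / γ ^ 2 with hf
  set F : ℝ → ℝ := fun u => u ^ (2 * N - 2) / (1 + u ^ 2) ^ M with hF
  set I : ℝ := ∫ γ in Ioi (0 : ℝ), F γ with hI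
  -- rewrite zpow
  have hfz : ∀ γ : ℝ, f γ =
      ((1 + Real.exp (8 * r) * γ ^ 2) ^ M)⁻¹ * (γ ^ 2 / (1 + γ ^ 2)) ^ N / γ ^ 2 := by
    intro γ; rw [hf]; simp [zpow_neg]
  have hA : ∀ γ : ℝ, (1:ℝ) ≤ 1 + Real.exp (8 * r) * γ ^ 2 := fun γ => by
    nlinarith [Real.exp_pos (8*r), sq_nonneg γ]
  have hApos : ∀ γ : ℝ, (0:ℝ) < (1 + Real.exp (8 * r) * γ ^ 2) ^ M :=
    fun γ => pow_pos (by nlinarith [hA γ]) M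
  have hA1 : ∀ γ : ℝ, (1:ℝ) ≤ (1 + Real.exp (8 * r) * γ ^ 2) ^ M :=
    fun γ => one_le_pow₀ (hA γ)
  have hB01 : ∀ γ : ℝ, 0 ≤ γ ^ 2 / (1 + γ ^ 2) ∧ γ ^ 2 / (1 + γ ^ 2) ≤ 1 := by
    intro γ
    refine ⟨by positivity, ?_⟩
    rw [div_le_one (by positivity)]; nlinarith
  have hfnonneg : ∀ γ : ℝ, 0 ≤ f γ := by
    intro γ
    rw [hfz]
    have := (hB01 γ).1
    positivity
  have hfeq : f = fun γ =>
      ((1 + Real.exp (8 * r) * γ ^ 2) ^ M)⁻¹ * (γ ^ 2 / (1 + γ ^ 2)) ^ N / γ ^ 2 :=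
    funext hfz
  have hfmeas : Measurable f := by
    rw [hfeq]
    fun_prop
  -- bound on (0,1]
  have hfle1 : ∀ γ ∈ Ioc (0:ℝ) 1, f γ ≤ 1 := by
    intro γ hγ
    have h0 : (0:ℝ) < γ ^ 2 := pow_pos hγ.1 2
    rw [hfz, div_le_one h0]
    have hBN : (γ ^ 2 / (1 + γ ^ 2)) ^ N ≤ γ ^ 2 :=
      (pow_le_of_le_one (hB01 γ).1 (hB01 γ).2 (by omega)).trans
        (div_le_self h0.le (by nlinarith))
    calc ((1 + Real.exp (8 * r) * γ ^ 2) ^ M)⁻¹ * (γ ^ 2 / (1 + γ ^ 2)) ^ N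
        ≤ 1 * γ ^ 2 :=
          mul_le_mul (inv_le_one_of_one_le₀ (hA1 γ)) hBN (pow_nonneg (hB01 γ).1 N) one_pos.le
      _ = γ ^ 2 := one_mul _
  have hint1 : IntegrableOn f (Ioc 0 1) := by
    apply Integrable.mono' (integrable_const (1:ℝ)) hfmeas.aestronglyMeasurable.restrict
    filter_upwards [ae_restrict_mem measurableSet_Ioc] with γ hγ
    rw [Real.norm_eq_abs, abs_of_nonneg (hfnonneg γ)]
    exact hfle1 γ hγ
  have hint2 : IntegrableOn f (Ioi 1) := by
    apply Integrable.mono'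
      (integrableOn_Ioi_rpow_of_lt (by norm_num : (-2:ℝ) < -1) one_pos)
      hfmeas.aestronglyMeasurable.restrict
    filter_upwards [ae_restrict_mem measurableSet_Ioi] with γ hγ
    have hγ0 : (0:ℝ) < γ := lt_trans one_pos hγ
    rw [Real.norm_eq_abs, abs_of_nonneg (hfnonneg γ),
      show (-2:ℝ) = -((2:ℕ):ℝ) by norm_num, Real.rpow_neg hγ0.le, Real.rpow_natCast,
      hfz, div_le_iff₀ (pow_pos hγ0 2), inv_mul_cancel₀ (pow_pos hγ0 2).ne']
    exact mul_le_one₀ (inv_le_one_of_one_le₀ (hA1 γ)) (pow_nonneg (hB01 γ).1 N)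
      (pow_le_one₀ (hB01 γ).1 (hB01 γ).2)
  have hIntf : IntegrableOn f (Ioi 0) := by
    rw [← Ioc_union_Ioi_eq_Ioi (zero_le_one (α := ℝ))]
    exact hint1.union hint2
  have hsplit : (∫ γ in Ioi (0:ℝ), f γ)
      = (∫ γ in Ioc (0:ℝ) 1, f γ) + ∫ γ in Ioi (1:ℝ), f γ := by
    rw [← setIntegral_union Ioc_disjoint_Ioi_same measurableSet_Ioi hint1 hint2,
      Ioc_union_Ioi_eq_Ioi (zero_le_one (α := ℝ))]
  -- facts about F
  have hFmeas : Measurable F := by rw [hF]; fun_prop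
  have hFnonneg : ∀ u : ℝ, 0 ≤ u → 0 ≤ F u := by
    intro u hu; rw [hF]; positivity
  have hFint1 : IntegrableOn F (Ioc 0 1) := by
    apply Integrable.mono' (integrable_const (1:ℝ)) hFmeas.aestronglyMeasurable.restrict
    filter_upwards [ae_restrict_mem measurableSet_Ioc] with u hu
    rw [Real.norm_eq_abs, abs_of_nonneg (hFnonneg u hu.1.le), hF]
    calc u ^ (2*N-2) / (1 + u^2)^M ≤ u ^ (2*N-2) / 1 := by
          apply div_le_div_of_nonneg_left (pow_nonneg hu.1.le _) one_pos
          exact one_le_pow₀ (by nlinarith [sq_nonneg u])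
      _ = u ^ (2*N-2) := div_one _
      _ ≤ 1 := pow_le_one₀ hu.1.le hu.2
  have hFint2 : IntegrableOn F (Ioi 1) := by
    apply Integrable.mono'
      (integrableOn_Ioi_rpow_of_lt (by norm_num : (-4:ℝ) < -1) one_pos)
      hFmeas.aestronglyMeasurable.restrict
    filter_upwards [ae_restrict_mem measurableSet_Ioi] with u hu
    have hu0 : (0:ℝ) < u := lt_trans one_pos hu
    rw [Real.norm_eq_abs, abs_of_nonneg (hFnonneg u hu0.le),
      show (-4:ℝ) = -((4:ℕ):ℝ) by norm_num, Real.rpow_neg hu0.le, Real.rpow_natCast,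
      show ((u:ℝ)^(4:ℕ))⁻¹ = 1/u^4 from (one_div _).symm, hF,
      div_le_div_iff₀ (by positivity) (by positivity), one_mul, ← pow_add]
    calc u ^ (2*N-2+4) ≤ u ^ (2*M) := pow_le_pow_right₀ hu.le (by omega)
      _ = (u^2)^M := by rw [← pow_mul]
      _ ≤ (1+u^2)^M := pow_le_pow_left₀ (by positivity) (by nlinarith) M
  have hFint : IntegrableOn F (Ioi 0) := by
    rw [← Ioc_union_Ioi_eq_Ioi (zero_le_one (α := ℝ))]
    exact hFint1.union hFint2
  have hc2 : Real.exp (8 * r) = c ^ 2 := by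
    rw [hcdef, ← Real.exp_nat_mul]; push_cast; ring_nf
  -- Piece 1
  set g1 : ℝ → ℝ := fun γ => γ ^ (2*N-2) * ((1 + Real.exp (8*r) * γ ^ 2) ^ M)⁻¹ with hg1
  have hg1pt : ∀ γ ∈ Ioc (0:ℝ) 1, f γ ≤ g1 γ := by
    intro γ hγ
    have h0 : (0:ℝ) < γ ^ 2 := pow_pos hγ.1 2
    have key : (γ ^ 2 / (1 + γ ^ 2)) ^ N / γ ^ 2 ≤ γ ^ (2*N-2) := by
      rw [div_pow, div_div, div_le_iff₀ (by positivity)]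
      calc (γ^2) ^ N = γ ^ (2*N-2) * γ ^ 2 := by rw [← pow_mul, ← pow_add]; congr 1; omega
        _ ≤ γ ^ (2*N-2) * ((1+γ^2)^N * γ^2) := by
            apply mul_le_mul_of_nonneg_left ?_ (pow_nonneg hγ.1.le _)
            nlinarith [one_le_pow₀ (by nlinarith : (1:ℝ) ≤ 1 + γ^2) (n := N)]
    calc f γ = ((1 + Real.exp (8*r) * γ ^ 2) ^ M)⁻¹ * ((γ^2/(1+γ^2))^N / γ^2) := by
          rw [hfz, mul_div_assoc]
      _ ≤ ((1 + Real.exp (8*r) * γ ^ 2) ^ M)⁻¹ * γ ^ (2*N-2) :=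
          mul_le_mul_of_nonneg_left key (inv_nonneg.2 (hApos γ).le)
      _ = g1 γ := mul_comm _ _
  have hg1int : IntegrableOn g1 (Ioc 0 1) := by
    have hg1meas : Measurable g1 := by rw [hg1]; fun_prop
    apply Integrable.mono' (integrable_const (1:ℝ)) hg1meas.aestronglyMeasurable.restrict
    filter_upwards [ae_restrict_mem measurableSet_Ioc] with γ hγ
    rw [Real.norm_eq_abs, hg1, abs_of_nonneg
      (mul_nonneg (pow_nonneg hγ.1.le _) (inv_nonneg.2 (hApos γ).le))]
    calc γ ^ (2*N-2) * ((1 + Real.exp (8*r) * γ ^ 2) ^ M)⁻¹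
        ≤ 1 * 1 := mul_le_mul (pow_le_one₀ hγ.1.le hγ.2)
          (inv_le_one_of_one_le₀ (hA1 γ)) (inv_nonneg.2 (hApos γ).le) one_pos.le
      _ = 1 := one_mul 1
  have hg1F : ∀ x : ℝ, g1 x = (c ^ (2*N-2))⁻¹ * F (c * x) := by
    intro x
    have hcn : (0:ℝ) < c ^ (2*N-2) := pow_pos hc _
    have hd : (0:ℝ) < (1 + Real.exp (8*r) * x ^ 2) ^ M := hApos x
    rw [hg1, hF]
    simp only [mul_pow, ← hc2]
    field_simp
  have hcomp : (∫ γ in Ioc (0:ℝ) 1, g1 γ)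
      = (c ^ (2*N-2))⁻¹ * (c⁻¹ * ∫ x in Ioc (0:ℝ) c, F x) := by
    rw [← intervalIntegral.integral_of_le zero_le_one,
      intervalIntegral.integral_congr (g := fun x => (c ^ (2*N-2))⁻¹ * F (c * x))
        (fun x _ => hg1F x),
      intervalIntegral.integral_const_mul,
      intervalIntegral.integral_comp_mul_left (fun x => F x) hc.ne',
      mul_zero, mul_one, smul_eq_mul, intervalIntegral.integral_of_le hc.le]
  have hJ : (∫ x in Ioc (0:ℝ) c, F x) ≤ I := by
    apply setIntegral_mono_set hFint
    · filter_upwards [ae_restrict_mem measurableSet_Ioi] with u hu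
      exact hFnonneg u (le_of_lt hu)
    · exact (Ioc_subset_Ioi_self).eventuallyLE
  have hKeq : (c ^ (2*N-2))⁻¹ * c⁻¹ = Real.exp (-8 * r * ((N:ℝ) - 1) - 4 * r) := by
    rw [hcdef, ← Real.exp_nat_mul, ← Real.exp_neg, ← Real.exp_neg, ← Real.exp_add]
    congr 1
    rw [Nat.cast_sub (by omega : 2 ≤ 2 * N)]
    push_cast
    ring
  have hInonneg : 0 ≤ I := by
    rw [hI]
    apply setIntegral_nonneg measurableSet_Ioi
    intro u hu; exact hFnonneg u (le_of_lt hu)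
  have hpiece1 : (∫ γ in Ioc (0:ℝ) 1, f γ)
      ≤ Real.exp (-8 * r * ((N:ℝ) - 1) - 4 * r) * I := by
    calc (∫ γ in Ioc (0:ℝ) 1, f γ) ≤ ∫ γ in Ioc (0:ℝ) 1, g1 γ :=
          setIntegral_mono_on hint1 hg1int measurableSet_Ioc hg1pt
      _ = (c ^ (2*N-2))⁻¹ * (c⁻¹ * ∫ x in Ioc (0:ℝ) c, F x) := hcomp
      _ ≤ (c ^ (2*N-2))⁻¹ * (c⁻¹ * I) := by gcongr
      _ = Real.exp (-8 * r * ((N:ℝ) - 1) - 4 * r) * I := by rw [← mul_assoc, hKeq]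
  -- Piece 2
  have hM2 : (2:ℝ) ≤ (M:ℝ) := by exact_mod_cast (by omega : 2 ≤ M)
  have hexpM : Real.exp (8*r) ^ M = Real.exp (8*M*r) := by
    rw [← Real.exp_nat_mul]; ring_nf
  have hpt2 : ∀ γ ∈ Ioi (1:ℝ), f γ ≤ Real.exp (-8*M*r) * γ ^ (-(2*(M:ℝ)+2)) := by
    intro γ hγ
    have hγ0 : (0:ℝ) < γ := lt_trans one_pos hγ
    have hrp : γ ^ (-(2*(M:ℝ)+2)) = (γ ^ (2*M+2))⁻¹ := by
      rw [show (-(2*(M:ℝ)+2)) = -((2*M+2 : ℕ):ℝ) by push_cast; ring,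
        Real.rpow_neg hγ0.le, Real.rpow_natCast]
    have hexpneg : Real.exp (-8*M*r) = (Real.exp (8*r) ^ M)⁻¹ := by
      rw [hexpM, ← Real.exp_neg]; ring_nf
    have h1 : f γ ≤ ((1 + Real.exp (8*r) * γ ^ 2) ^ M * γ ^ 2)⁻¹ := by
      rw [hfz, mul_inv, div_eq_mul_inv]
      apply mul_le_mul_of_nonneg_right ?_ (inv_nonneg.2 (pow_pos hγ0 2).le)
      exact mul_le_of_le_one_right (inv_nonneg.2 (hApos γ).le)
        (pow_le_one₀ (hB01 γ).1 (hB01 γ).2)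
    have h2 : ((1 + Real.exp (8*r) * γ ^ 2) ^ M * γ ^ 2)⁻¹
        ≤ ((Real.exp (8*r) * γ ^ 2) ^ M * γ ^ 2)⁻¹ := by
      apply inv_anti₀ (by positivity)
      apply mul_le_mul_of_nonneg_right ?_ (pow_pos hγ0 2).le
      apply pow_le_pow_left₀ (by positivity) (by nlinarith [Real.exp_pos (8*r), sq_nonneg γ]) M
    have h3 : ((Real.exp (8*r) * γ ^ 2) ^ M * γ ^ 2)⁻¹
        = Real.exp (-8*M*r) * γ ^ (-(2*(M:ℝ)+2)) := by
      rw [hrp, hexpneg, mul_pow, ← pow_mul, mul_assoc, ← pow_add, ← mul_inv]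
    exact (h1.trans h2).trans_eq h3
  have hmaj2 : IntegrableOn (fun γ : ℝ => Real.exp (-8*M*r) * γ ^ (-(2*(M:ℝ)+2))) (Ioi 1) :=
    (integrableOn_Ioi_rpow_of_lt (by nlinarith : -(2*(M:ℝ)+2) < -1) one_pos).const_mul _
  have hval2 : (∫ γ in Ioi (1:ℝ), γ ^ (-(2*(M:ℝ)+2))) = 1 / (2*(M:ℝ)+1) := by
    rw [integral_Ioi_rpow_of_lt (by nlinarith : -(2*(M:ℝ)+2) < -1) one_pos, Real.one_rpow,
      show -(2*(M:ℝ)+2)+1 = -(2*(M:ℝ)+1) by ring, neg_div_neg_eq]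
  have hpiece2 : (∫ γ in Ioi (1:ℝ), f γ) ≤ Real.exp (-8*M*r) / (2*(M:ℝ) - 1) := by
    calc (∫ γ in Ioi (1:ℝ), f γ)
        ≤ ∫ γ in Ioi (1:ℝ), Real.exp (-8*M*r) * γ ^ (-(2*(M:ℝ)+2)) :=
          setIntegral_mono_on hint2 hmaj2 measurableSet_Ioi hpt2
      _ = Real.exp (-8*M*r) * (1 / (2*(M:ℝ)+1)) := by
          rw [integral_const_mul, hval2]
      _ = Real.exp (-8*M*r) / (2*(M:ℝ)+1) := by ring
      _ ≤ Real.exp (-8*M*r) / (2*(M:ℝ) - 1) := by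
          apply div_le_div_of_nonneg_left (Real.exp_pos _).le (by linarith) (by linarith)
  -- Assembly
  have hRHS1 : Real.exp (-8 * r * ((N:ℝ) - 1) - 4 * r) * (π / 2) * (2 / π * I)
      = Real.exp (-8 * r * ((N:ℝ) - 1) - 4 * r) * I := by
    have hπ : (π:ℝ) ≠ 0 := Real.pi_ne_zero
    field_simp
  rw [hsplit, hRHS1]
  exact add_le_add hpiece1 hpiece2
end

section
/- Suppose f, g : [0, T] → ℝ are continuous, K : [0, T] → ℝ is continuous and non-negative, f(0) = g(0) > 0, f satisfies f(t) + ∫₀^t K(t−s) f(s) ds = g(t), and the third Picard iterate P_3(t) = g(t) − (K*g)(t) + (K*K*g)(t) − (K*K*K*g)(t) is strictly positive on [0, T]. Then f(t) > 0 for all t ∈ [0, T]. -/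
open Real MeasureTheory Set intervalIntegral

lemma conv_integrable {K h : ℝ → ℝ} {T t : ℝ}
    (hK : ContinuousOn K (Icc 0 T)) (hh : ContinuousOn h (Icc 0 T))
    (ht : t ∈ Icc (0 : ℝ) T) :
    IntervalIntegrable (fun s => K (t - s) * h s) volume 0 t := by
  apply ContinuousOn.intervalIntegrable
  rw [uIcc_of_le ht.1]
  refine ContinuousOn.mul ?_ (hh.mono (Icc_subset_Icc le_rfl ht.2))
  refine hK.comp ((continuous_const.sub continuous_id).continuousOn) ?_
  intro s hs
  obtain ⟨h1, h2⟩ := hs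
  simp only [mem_Icc, id_eq]
  exact ⟨by linarith, by linarith [ht.2]⟩

lemma conv_mono {K a b : ℝ → ℝ} {t : ℝ} (ht : 0 ≤ t)
    (hKpos : ∀ s ∈ Icc (0 : ℝ) t, 0 ≤ K (t - s))
    (hab : ∀ s ∈ Icc (0 : ℝ) t, a s ≤ b s)
    (ha : IntervalIntegrable (fun s => K (t - s) * a s) volume 0 t)
    (hb : IntervalIntegrable (fun s => K (t - s) * b s) volume 0 t) :
    (∫ s in (0 : ℝ)..t, K (t - s) * a s) ≤ ∫ s in (0 : ℝ)..t, K (t - s) * b s :=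
  intervalIntegral.integral_mono_on ht ha hb
    (fun s hs => mul_le_mul_of_nonneg_left (hab s hs) (hKpos s hs))

theorem volterra_positive_of_P3_positive
    (f g K : ℝ → ℝ) (T : ℝ) (hT : 0 ≤ T)
    (hf : ContinuousOn f (Icc 0 T)) (hg : ContinuousOn g (Icc 0 T))
    (hK : ContinuousOn K (Icc 0 T))
    (hKpos : ∀ t ∈ Icc (0 : ℝ) T, 0 ≤ K t)
    (hinit : f 0 = g 0) (hg0 : 0 < g 0)
    (hVolterra : ∀ t ∈ Icc (0 : ℝ) T,
      f t + (∫ s in (0 : ℝ)..t, K (t - s) * f s) = g t)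
    (hP3 : ∀ t ∈ Icc (0 : ℝ) T,
      0 < g t - (∫ s in (0 : ℝ)..t, K (t - s) * g s)
          + (∫ s in (0 : ℝ)..t, K (t - s) * ∫ u in (0 : ℝ)..s, K (s - u) * g u)
          - (∫ s in (0 : ℝ)..t, K (t - s) *
              ∫ u in (0 : ℝ)..s, K (s - u) * ∫ v in (0 : ℝ)..u, K (u - v) * g v)) :
    ∀ t ∈ Icc (0 : ℝ) T, 0 < f t := by
  -- clamp to [0, T]
  set pr : ℝ → ℝ := fun x => max 0 (min x T) with hprdef
  have hprc : Continuous pr := continuous_const.max (continuous_id.min continuous_const)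
  have hprmem : ∀ x, pr x ∈ Icc (0 : ℝ) T := fun x =>
    ⟨le_max_left _ _, max_le hT (min_le_right x T)⟩
  have hpreq : ∀ x ∈ Icc (0 : ℝ) T, pr x = x := by
    intro x hx
    simp only [hprdef, min_eq_left hx.2, max_eq_right hx.1]
  set K' : ℝ → ℝ := fun x => K (pr x) with hK'def
  set g' : ℝ → ℝ := fun x => g (pr x) with hg'def
  have hK'c : Continuous K' := hK.comp_continuous hprc hprmem
  have hg'c : Continuous g' := hg.comp_continuous hprc hprmem
  -- iterated convolutions
  set C1 : ℝ → ℝ := fun t => ∫ s in (0 : ℝ)..t, K' (t - s) * g' s with hC1def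
  have hC1c : Continuous C1 := by
    exact intervalIntegral.continuous_parametric_intervalIntegral_of_continuous
      (f := fun t s => K' (t - s) * g' s)
      (((hK'c.comp (continuous_fst.sub continuous_snd))).mul (hg'c.comp continuous_snd))
      continuous_id
  set C2 : ℝ → ℝ := fun t => ∫ s in (0 : ℝ)..t, K' (t - s) * C1 s with hC2def
  have hC2c : Continuous C2 := by
    exact intervalIntegral.continuous_parametric_intervalIntegral_of_continuous
      (f := fun t s => K' (t - s) * C1 s)
      (((hK'c.comp (continuous_fst.sub continuous_snd))).mul (hC1c.comp continuous_snd))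
      continuous_id
  set C3 : ℝ → ℝ := fun t => ∫ s in (0 : ℝ)..t, K' (t - s) * C2 s with hC3def
  have hC3c : Continuous C3 := by
    exact intervalIntegral.continuous_parametric_intervalIntegral_of_continuous
      (f := fun t s => K' (t - s) * C2 s)
      (((hK'c.comp (continuous_fst.sub continuous_snd))).mul (hC2c.comp continuous_snd))
      continuous_id
  -- on [0,T] the clamped kernel agrees with K in the integrals
  have hsubmem : ∀ {t : ℝ}, t ∈ Icc (0 : ℝ) T → ∀ s ∈ Icc (0 : ℝ) t,
      (t - s) ∈ Icc (0 : ℝ) T ∧ s ∈ Icc (0 : ℝ) T := by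
    intro t ht s hs
    exact ⟨⟨by linarith [hs.2], by linarith [hs.1, ht.2]⟩, ⟨hs.1, hs.2.trans ht.2⟩⟩
  have heq1 : ∀ t ∈ Icc (0 : ℝ) T, C1 t = ∫ s in (0 : ℝ)..t, K (t - s) * g s := by
    intro t ht
    apply intervalIntegral.integral_congr
    rw [uIcc_of_le ht.1]
    intro s hs
    dsimp only
    obtain ⟨h1, h2⟩ := hsubmem ht s hs
    simp only [hK'def, hg'def, hpreq _ h1, hpreq _ h2]
  have heq2 : ∀ t ∈ Icc (0 : ℝ) T, C2 t = ∫ s in (0 : ℝ)..t, K (t - s) * C1 s := by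
    intro t ht
    apply intervalIntegral.integral_congr
    rw [uIcc_of_le ht.1]
    intro s hs
    simp only [hK'def, hpreq _ (hsubmem ht s hs).1]
  have heq3 : ∀ t ∈ Icc (0 : ℝ) T, C3 t = ∫ s in (0 : ℝ)..t, K (t - s) * C2 s := by
    intro t ht
    apply intervalIntegral.integral_congr
    rw [uIcc_of_le ht.1]
    intro s hs
    simp only [hK'def, hpreq _ (hsubmem ht s hs).1]
  -- rewrite the P3 hypothesis
  have hP3' : ∀ t ∈ Icc (0 : ℝ) T, 0 < g t - C1 t + C2 t - C3 t := by
    intro t ht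
    have e2 : C2 t = ∫ s in (0 : ℝ)..t, K (t - s) * ∫ u in (0 : ℝ)..s, K (s - u) * g u := by
      rw [heq2 t ht]
      apply intervalIntegral.integral_congr
      rw [uIcc_of_le ht.1]
      intro s hs
      dsimp only
      rw [heq1 s (hsubmem ht s hs).2]
    have e3 : C3 t = ∫ s in (0 : ℝ)..t, K (t - s) *
        ∫ u in (0 : ℝ)..s, K (s - u) * ∫ v in (0 : ℝ)..u, K (u - v) * g v := by
      rw [heq3 t ht]
      apply intervalIntegral.integral_congr
      rw [uIcc_of_le ht.1]
      intro s hs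
      have hsT := (hsubmem ht s hs).2
      have e2' : C2 s = ∫ u in (0 : ℝ)..s, K (s - u) * ∫ v in (0 : ℝ)..u, K (u - v) * g v := by
        rw [heq2 s hsT]
        apply intervalIntegral.integral_congr
        rw [uIcc_of_le hsT.1]
        intro u hu
        dsimp only
        rw [heq1 u (hsubmem hsT u hu).2]
      dsimp only
      rw [e2']
    rw [heq1 t ht, e2, e3]
    exact hP3 t ht
  -- contradiction argument
  by_contra hcon
  push_neg at hcon
  obtain ⟨t₀, ht₀, hft₀⟩ := hcon
  set S : Set ℝ := Icc (0 : ℝ) T ∩ f ⁻¹' Iic 0 with hSdef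
  have hSne : S.Nonempty := ⟨t₀, ht₀, hft₀⟩
  have hSclosed : IsClosed S :=
    hf.preimage_isClosed_of_isClosed isClosed_Icc isClosed_Iic
  have hSbdd : BddBelow S := ⟨0, fun x hx => hx.1.1⟩
  set τ : ℝ := sInf S with hτdef
  have hτS : τ ∈ S := hSclosed.csInf_mem hSne hSbdd
  have hτ0 : 0 < τ := by
    rcases lt_or_eq_of_le hτS.1.1 with h | h
    · exact h
    · exfalso
      have h2 : f τ ≤ 0 := hτS.2
      rw [← h, hinit] at h2
      linarith
  have hτT : τ ≤ T := hτS.1.2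
  have hτIcc : τ ∈ Icc (0 : ℝ) T := ⟨hτ0.le, hτT⟩
  have hpos : ∀ s, 0 ≤ s → s < τ → 0 < f s := by
    intro s hs0 hsτ
    by_contra h
    push_neg at h
    have : s ∈ S := ⟨⟨hs0, hsτ.le.trans hτT⟩, h⟩
    exact absurd (csInf_le hSbdd this) (not_le.2 hsτ)
  have hfnn : ∀ s ∈ Icc (0 : ℝ) τ, 0 ≤ f s := by
    intro s hs
    rcases lt_or_eq_of_le hs.2 with hlt | heq
    · exact (hpos s hs.1 hlt).le
    · rw [heq]
      have hcw : ContinuousWithinAt f (Ico 0 τ) τ :=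
        (hf τ hτIcc).mono (fun x hx => ⟨hx.1, hx.2.le.trans hτT⟩)
      have hne : (nhdsWithin τ (Ico (0 : ℝ) τ)).NeBot := by
        rw [← mem_closure_iff_nhdsWithin_neBot, closure_Ico hτ0.ne]
        exact ⟨hτ0.le, le_rfl⟩
      haveI := hne
      refine ge_of_tendsto hcw ?_
      filter_upwards [self_mem_nhdsWithin] with x hx
      exact (hpos x hx.1 hx.2).le
  -- within [0, τ] everything lives in [0, T]
  have hsub : Icc (0 : ℝ) τ ⊆ Icc 0 T := Icc_subset_Icc le_rfl hτT
  have hKnn : ∀ {t : ℝ}, t ∈ Icc (0 : ℝ) τ → ∀ s ∈ Icc (0 : ℝ) t, 0 ≤ K (t - s) := by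
    intro t ht s hs
    exact hKpos _ (hsubmem (hsub ht) s hs).1
  have hVol : ∀ t ∈ Icc (0 : ℝ) τ, f t = g t - ∫ s in (0 : ℝ)..t, K (t - s) * f s := by
    intro t ht
    have := hVolterra t (hsub ht)
    linarith
  -- step 1 : f ≤ g on [0, τ]
  have h1 : ∀ t ∈ Icc (0 : ℝ) τ, f t ≤ g t := by
    intro t ht
    have hnn : 0 ≤ ∫ s in (0 : ℝ)..t, K (t - s) * f s := by
      apply intervalIntegral.integral_nonneg ht.1
      intro s hs
      exact mul_nonneg (hKnn ht s hs) (hfnn s ⟨hs.1, hs.2.trans ht.2⟩)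
    linarith [hVol t ht]
  -- step 2 : g - C1 ≤ f on [0, τ]
  have h2 : ∀ t ∈ Icc (0 : ℝ) τ, g t - C1 t ≤ f t := by
    intro t ht
    have hmono := conv_mono ht.1 (hKnn ht)
      (fun s hs => h1 s ⟨hs.1, hs.2.trans ht.2⟩)
      (conv_integrable hK hf (hsub ht)) (conv_integrable hK hg (hsub ht))
    rw [heq1 t (hsub ht)]
    linarith [hVol t ht]
  -- step 3 : f ≤ g - C1 + C2 on [0, τ]
  have hgC1 : ContinuousOn (fun s => g s - C1 s) (Icc 0 T) := hg.sub hC1c.continuousOn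
  have h3 : ∀ t ∈ Icc (0 : ℝ) τ, f t ≤ g t - C1 t + C2 t := by
    intro t ht
    have hmono := conv_mono ht.1 (hKnn ht)
      (fun s hs => h2 s ⟨hs.1, hs.2.trans ht.2⟩)
      (conv_integrable hK hgC1 (hsub ht)) (conv_integrable hK hf (hsub ht))
    have hsplit : (∫ s in (0 : ℝ)..t, K (t - s) * (g s - C1 s))
        = (∫ s in (0 : ℝ)..t, K (t - s) * g s) - ∫ s in (0 : ℝ)..t, K (t - s) * C1 s := by
      rw [← intervalIntegral.integral_sub (conv_integrable hK hg (hsub ht))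
        (conv_integrable hK hC1c.continuousOn (hsub ht))]
      congr 1
      ext s
      ring
    rw [hsplit, ← heq1 t (hsub ht), ← heq2 t (hsub ht)] at hmono
    linarith [hVol t ht]
  -- step 4 : g - C1 + C2 - C3 ≤ f on [0, τ]
  have hgC1C2 : ContinuousOn (fun s => g s - C1 s + C2 s) (Icc 0 T) :=
    (hg.sub hC1c.continuousOn).add hC2c.continuousOn
  have h4 : ∀ t ∈ Icc (0 : ℝ) τ, g t - C1 t + C2 t - C3 t ≤ f t := by
    intro t ht
    have hmono := conv_mono ht.1 (hKnn ht)
      (fun s hs => h3 s ⟨hs.1, hs.2.trans ht.2⟩)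
      (conv_integrable hK hf (hsub ht)) (conv_integrable hK hgC1C2 (hsub ht))
    have hsplit : (∫ s in (0 : ℝ)..t, K (t - s) * (g s - C1 s + C2 s))
        = ((∫ s in (0 : ℝ)..t, K (t - s) * g s) - ∫ s in (0 : ℝ)..t, K (t - s) * C1 s)
          + ∫ s in (0 : ℝ)..t, K (t - s) * C2 s := by
      rw [← intervalIntegral.integral_sub (conv_integrable hK hg (hsub ht))
        (conv_integrable hK hC1c.continuousOn (hsub ht)),
        ← intervalIntegral.integral_add
          (((conv_integrable hK hg (hsub ht)).sub
            (conv_integrable hK hC1c.continuousOn (hsub ht))))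
          (conv_integrable hK hC2c.continuousOn (hsub ht))]
      congr 1
      ext s
      ring
    rw [hsplit, ← heq1 t (hsub ht), ← heq2 t (hsub ht), ← heq3 t (hsub ht)] at hmono
    linarith [hVol t ht]
  -- contradiction at τ
  have := h4 τ ⟨hτ0.le, le_rfl⟩
  have := hP3' τ hτIcc
  have : f τ ≤ 0 := hτS.2
  linarith [h4 τ (⟨hτ0.le, le_rfl⟩ : τ ∈ Icc (0:ℝ) τ), hP3' τ hτIcc]
end

section
/- Define sequences (a_k), (b_k) of reals by a_0 = b_0 = 0, a_1 = (13/14) b_1, b_1 = (35/27) A for a given real constant A, and for k ≥ 2, (a_k, b_k)ᵀ = M_k^{-1} N_k (a_{k-1}, b_{k-1})ᵀ with M_k = [[8k+6, −13], [−10, 8k+9]] and N_k = [[8(k−1), 0], [−10, 8(k−1)]]. Then the series Γ̄₁(γ) = Σ_{k≥0} a_k (γ²/(1+γ²))^k and Γ̄₂(γ) = Σ_{k≥0} b_k (γ²/(1+γ²))^k converge absolutely and uniformly on [0,∞), and their sums satisfy the system 4γ Γ̄₁'(γ) + 6 Γ̄₁ − 13 Γ̄₂ = 0 and 4γ Γ̄₂'(γ)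 + 9 Γ̄₂ − (10/(1+γ²))(Γ̄₁ + γ² A) = 0 on (0, ∞). -/
open Real Set Filter Matrix

noncomputable def Mmat (k : ℕ) : Matrix (Fin 2) (Fin 2) ℝ :=
  !![8 * (k : ℝ) + 6, -13; -10, 8 * (k : ℝ) + 9]

noncomputable def Nmat (k : ℕ) : Matrix (Fin 2) (Fin 2) ℝ :=
  !![8 * ((k : ℝ) - 1), 0; -10, 8 * ((k : ℝ) - 1)]

/-!
In the norm `max (|a|, 5/2 |b|)` the step `(a_k, b_k) ↦ (a_{k+1}, b_{k+1})` contracts by the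
factor `1 - 1.1/(k+1)` once `k ≥ 7`, so Raabe's test gives `∑ |a_k| < ∞` and `∑ |b_k| < ∞`. As
`x = γ²/(1+γ²)` ranges over `[0, 1)`, the Weierstrass M-test then gives absolute and uniform
convergence on `[0, ∞)`. Since `γ x'(γ) = 2x(1-x)` and `1/(1+γ²) = 1 - x`, the system becomes
`8x(1-x) F' + 6F - 13G = 0` and `8x(1-x) G' + 9G - 10(1-x) F - 10 A x = 0` for the power series
`F = ∑ a_k x^k`, `G = ∑ b_k x^k`, and comparing coefficients of `x^k` gives back the recursion.
-/

theorem sub_mul_rpow_sub_one_le_rpow {m p : ℝ} (hm : 0 ≤ m) (hp : 1 ≤ p) :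
    (m + 1 - p) * (m + 1) ^ (p - 1) ≤ m ^ p := by
  have hpos : 0 < m + 1 := by linarith
  have hs : -1 ≤ -(m + 1)⁻¹ := neg_le_neg (inv_le_one_of_one_le₀ (by linarith))
  have hb := one_add_mul_self_le_rpow_one_add hs hp
  rw [show 1 + -(m + 1)⁻¹ = m / (m + 1) by field_simp; ring, div_rpow hm hpos.le,
    le_div_iff₀ (rpow_pos_of_pos hpos p)] at hb
  calc (m + 1 - p) * (m + 1) ^ (p - 1) = (1 + p * -(m + 1)⁻¹) * (m + 1) ^ p := by
        rw [rpow_sub_one hpos.ne']; field_simp; ring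
    _ ≤ m ^ p := hb

/-- Raabe's test. -/
theorem summable_of_succ_mul_le_sub_mul {ν : ℕ → ℝ} {p : ℝ} {N : ℕ} (hp : 1 < p)
    (hν : ∀ k, 0 ≤ ν k) (h : ∀ m ≥ N, ((m : ℝ) + 1) * ν (m + 1) ≤ ((m : ℝ) + 1 - p) * ν m) :
    Summable ν := by
  have hstep : ∀ m ≥ N, ν (m + 1) * ((m + 1 : ℕ) : ℝ) ^ p ≤ ν m * (m : ℝ) ^ p := by
    intro m hm
    have hpos : (0 : ℝ) < m + 1 := by positivity
    push_cast
    calc ν (m + 1) * ((m : ℝ) + 1) ^ p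
        = ((m : ℝ) + 1) * ν (m + 1) * ((m : ℝ) + 1) ^ (p - 1) := by
          rw [rpow_sub_one hpos.ne']; field_simp
      _ ≤ ((m : ℝ) + 1 - p) * ν m * ((m : ℝ) + 1) ^ (p - 1) :=
          mul_le_mul_of_nonneg_right (h m hm) (by positivity)
      _ = ν m * (((m : ℝ) + 1 - p) * ((m : ℝ) + 1) ^ (p - 1)) := by ring
      _ ≤ ν m * (m : ℝ) ^ p := by
          gcongr
          · exact hν m
          · exact sub_mul_rpow_sub_one_le_rpow m.cast_nonneg hp.le
  have hbound : ∀ m ≥ N, ν m * (m : ℝ) ^ p ≤ ν N * (N : ℝ) ^ p := by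
    intro m hm
    induction m, hm using Nat.le_induction with
    | base => exact le_rfl
    | succ m hm ih => exact (hstep m hm).trans ih
  refine .of_norm_bounded_eventually_nat
    ((summable_nat_rpow_inv.2 hp).mul_left (ν N * (N : ℝ) ^ p)) ?_
  filter_upwards [eventually_ge_atTop (max N 1)] with m hm
  have hm_pos : (0 : ℝ) < (m : ℝ) ^ p :=
    rpow_pos_of_pos (by exact_mod_cast (le_of_max_le_right hm)) p
  rw [norm_of_nonneg (hν m), ← div_eq_mul_inv, le_div_iff₀ hm_pos]
  exact hbound m (le_of_max_le_left hm)

theorem summable_mul_pow_of_abs_le {c : ℕ → ℝ} {C x : ℝ} (hc : ∀ k, |c k| ≤ C) (hx : |x| < 1) :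
    Summable fun k => c k * x ^ k := by
  refine .of_norm_bounded ((summable_geometric_of_lt_one (abs_nonneg x) hx).mul_left C)
    fun k => ?_
  rw [norm_mul, norm_pow, norm_eq_abs, norm_eq_abs]
  gcongr
  exact hc k

theorem summable_natCast_mul_mul_pow_of_abs_le {c : ℕ → ℝ} {C x : ℝ} (hc : ∀ k, |c k| ≤ C)
    (hx : |x| < 1) : Summable fun k : ℕ => k * c k * x ^ k := by
  have hg := summable_pow_mul_geometric_of_norm_lt_one 1 (r := |x|) (by rwa [norm_abs_eq_norm])
  refine .of_norm_bounded (hg.mul_left C) fun k => ?_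
  rw [norm_mul, norm_mul, norm_pow, norm_eq_abs, norm_eq_abs, norm_eq_abs, Nat.abs_cast, pow_one]
  calc (k : ℝ) * |c k| * |x| ^ k ≤ k * C * |x| ^ k := by gcongr; exact hc k
    _ = C * (k * |x| ^ k) := by ring

theorem hasDerivAt_tsum_mul_pow {c : ℕ → ℝ} {C x : ℝ} (hc : ∀ k, |c k| ≤ C) (hx : |x| < 1) :
    HasDerivAt (fun y => ∑' k, c k * y ^ k) (∑' k, c k * (k * x ^ (k - 1))) x := by
  obtain ⟨r, hxr, hr⟩ := exists_between hx
  have hr0 : 0 < r := (abs_nonneg x).trans_lt hxr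
  have hC : 0 ≤ C := (abs_nonneg _).trans (hc 0)
  have hu := (summable_natCast_mul_mul_pow_of_abs_le (c := fun _ => C) (fun _ => le_rfl)
    (by rwa [abs_of_pos hr0])).div_const r
  refine hasDerivAt_tsum_of_isPreconnected hu isOpen_Ioo isPreconnected_Ioo
    (fun k y _ => (hasDerivAt_pow k y).const_mul (c k)) (fun k y hy => ?_) (abs_lt.1 hxr)
    (summable_mul_pow_of_abs_le hc hx) (abs_lt.1 hxr)
  have hy : |y| ≤ r := abs_le.2 ⟨hy.1.le, hy.2.le⟩
  rcases k with _ | k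
  · simp
  · calc ‖c (k + 1) * (((k + 1 : ℕ) : ℝ) * y ^ (k + 1 - 1))‖
        = |c (k + 1)| * ((k + 1 : ℕ) * |y| ^ k) := by
          rw [norm_mul, norm_mul, norm_pow, Nat.add_sub_cancel, norm_eq_abs, norm_eq_abs,
            norm_eq_abs, Nat.abs_cast]
      _ ≤ C * ((k + 1 : ℕ) * r ^ k) := by gcongr; exact hc _
      _ = (k + 1 : ℕ) * C * r ^ (k + 1) / r := by field_simp; ring

theorem mul_tsum_mul_natCast_mul_pow_sub_one (c : ℕ → ℝ) (x : ℝ) :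
    x * ∑' k, c k * (k * x ^ (k - 1)) = ∑' k : ℕ, k * c k * x ^ k := by
  rw [← tsum_mul_left]
  congr 1
  funext k
  rcases k with _ | k
  · simp
  · simp only [Nat.add_sub_cancel, pow_succ]
    ring

theorem eq_add_mul_of_hasSum_mul_pow {p q : ℕ → ℝ} {x P Q : ℝ}
    (hp : HasSum (fun k => p k * x ^ k) P) (hq : HasSum (fun k => q k * x ^ k) Q)
    (hpq : ∀ k, p (k + 1) = q k) : P = p 0 + x * Q := by
  rw [← hasSum_nat_add_iff' 1, Finset.sum_range_one, pow_zero, mul_one] at hp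
  have hq' : HasSum (fun k => p (k + 1) * x ^ (k + 1)) (x * Q) :=
    (hq.mul_left x).congr_fun fun k => by rw [hpq, pow_succ]; ring
  linarith [hp.unique hq']

theorem abs_mul_pow_le_abs {c x : ℝ} (hx : |x| ≤ 1) (k : ℕ) : |c * x ^ k| ≤ |c| := by
  rw [abs_mul, abs_pow]
  exact mul_le_of_le_one_right (abs_nonneg c) (pow_le_one₀ (abs_nonneg x) hx)

theorem summable_abs_mul_pow {c : ℕ → ℝ} (hc : Summable fun k => |c k|) {x : ℝ} (hx : |x| ≤ 1) :
    Summable fun k => |c k * x ^ k| :=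
  .of_nonneg_of_le (fun _ => abs_nonneg _) (abs_mul_pow_le_abs hx ·) hc

theorem tendstoUniformlyOn_sum_range_mul_pow {α : Type*} {c : ℕ → ℝ}
    (hc : Summable fun k => |c k|) {f : α → ℝ} {s : Set α} (hf : ∀ y ∈ s, |f y| ≤ 1) :
    TendstoUniformlyOn (fun n y => ∑ k ∈ Finset.range n, c k * f y ^ k)
      (fun y => ∑' k, c k * f y ^ k) atTop s :=
  tendstoUniformlyOn_tsum_nat hc fun k y hy => abs_mul_pow_le_abs (hf y hy) k

theorem hasDerivAt_sq_div_one_add_sq (γ : ℝ) :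
    HasDerivAt (fun γ : ℝ => γ ^ 2 / (1 + γ ^ 2)) (2 * γ / (1 + γ ^ 2) ^ 2) γ := by
  refine ((hasDerivAt_pow 2 γ).div ((hasDerivAt_pow 2 γ).const_add 1)
    (by positivity)).congr_deriv ?_
  field_simp
  ring

theorem four_mul_mul_deriv_sq_div_one_add_sq (γ : ℝ) :
    4 * γ * (2 * γ / (1 + γ ^ 2) ^ 2) =
      8 * (γ ^ 2 / (1 + γ ^ 2)) * (1 - γ ^ 2 / (1 + γ ^ 2)) := by
  field_simp
  ring

theorem one_sub_sq_div_one_add_sq (γ : ℝ) : 1 - γ ^ 2 / (1 + γ ^ 2) = 1 / (1 + γ ^ 2) := by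
  field_simp
  ring

theorem abs_sq_div_one_add_sq_lt_one (γ : ℝ) : |γ ^ 2 / (1 + γ ^ 2)| < 1 := by
  rw [abs_of_nonneg (by positivity), div_lt_one (by positivity)]
  linarith

theorem isUnit_det_Mmat (k : ℕ) : IsUnit (Mmat k).det := by
  rw [isUnit_iff_ne_zero, Mmat, det_fin_two_of]
  rcases k with _ | k
  · norm_num
  · push_cast
    nlinarith

theorem Mmat_components_of_eq_inv_mul_mulVec {k : ℕ} {x y u v : ℝ}
    (h : ![x, y] = ((Mmat k)⁻¹ * Nmat k) *ᵥ ![u, v]) :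
    (8 * (k : ℝ) + 6) * x - 13 * y = 8 * ((k : ℝ) - 1) * u ∧
      -10 * x + (8 * (k : ℝ) + 9) * y = -10 * u + 8 * ((k : ℝ) - 1) * v := by
  have hM : Mmat k *ᵥ ![x, y] = Nmat k *ᵥ ![u, v] := by
    rw [h, mulVec_mulVec, ← Matrix.mul_assoc, mul_nonsing_inv _ (isUnit_det_Mmat k),
      Matrix.one_mul]
  have h₀ := congrFun hM 0
  have h₁ := congrFun hM 1
  simp only [Mmat, Nmat, mulVec, dotProduct, Fin.sum_univ_two, of_apply, cons_val', cons_val_zero,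
    cons_val_one, cons_val_fin_one, neg_mul, zero_mul, add_zero] at h₀ h₁
  constructor <;> linarith

/-- The recursion `M_k (a_k, b_k) = N_k (a_{k-1}, b_{k-1})` written out for `k + 1`; at `k = 0`
the prescribed values of `a₁, b₁` appear as the source term `10 A`. -/
structure ProfileRecurrence (A : ℝ) (a b : ℕ → ℝ) : Prop where
  zero_fst : a 0 = 0
  zero_snd : b 0 = 0
  succ_fst (k : ℕ) : (8 * ((k : ℝ) + 1) + 6) * a (k + 1) - 13 * b (k + 1) = 8 * k * a k
  succ_snd (k : ℕ) : -10 * a (k + 1) + (8 * ((k : ℝ) + 1) + 9) * b (k + 1) =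
    -10 * a k + 8 * k * b k + if k = 0 then 10 * A else 0

theorem ProfileRecurrence.of_mulVec {A : ℝ} {a b : ℕ → ℝ} (ha0 : a 0 = 0) (hb0 : b 0 = 0)
    (hb1 : b 1 = (35 / 27) * A) (ha1 : a 1 = (13 / 14) * b 1)
    (hrec : ∀ k, 2 ≤ k → ![a k, b k] = ((Mmat k)⁻¹ * Nmat k).mulVec ![a (k - 1), b (k - 1)]) :
    ProfileRecurrence A a b := by
  have hcomp (k : ℕ) (hk : k ≠ 0) :=
    Mmat_components_of_eq_inv_mul_mulVec (hrec (k + 1) (by omega))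
  refine ⟨ha0, hb0, fun k => ?_, fun k => ?_⟩
  · rcases eq_or_ne k 0 with rfl | hk
    · norm_num [ha1]
      ring
    · simpa using (hcomp k hk).1
  · rcases eq_or_ne k 0 with rfl | hk
    · norm_num [ha0, ha1, hb1]
      ring
    · simpa [hk] using (hcomp k hk).2

/-- The weight `5/2` balances the off-diagonal entries `104 m` and `-140` of `adj M_{m+1} N_{m+1}`,
making the step a contraction with the rate `1 - 1.1/(m+1)` required by Raabe's test. -/
theorem succ_mul_max_abs_le {m x y x' y' : ℝ} (hm : 7 ≤ m)
    (h₁ : (64 * m ^ 2 + 248 * m + 108) * x' = (64 * m ^ 2 + 136 * m - 130) * x + 104 * m * y)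
    (h₂ : (64 * m ^ 2 + 248 * m + 108) * y' = -140 * x + (64 * m ^ 2 + 112 * m) * y) :
    (m + 1) * max |x'| (5 / 2 * |y'|) ≤ (m + 1 - 11 / 10) * max |x| (5 / 2 * |y|) := by
  set D := 64 * m ^ 2 + 248 * m + 108
  set ν := max |x| (5 / 2 * |y|)
  have hD : 0 < D := by nlinarith
  have hx : |x| ≤ ν := le_max_left _ _
  have hy : 5 / 2 * |y| ≤ ν := le_max_right _ _
  have hν : 0 ≤ ν := (abs_nonneg x).trans hx
  have hα : 0 ≤ 64 * m ^ 2 + 136 * m - 130 := by nlinarith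
  have hβ : 0 ≤ 64 * m ^ 2 + 112 * m := by nlinarith
  have hx' : D * |x'| ≤ (64 * m ^ 2 + 136 * m - 130) * |x| + 104 * m * |y| := by
    rw [← abs_of_pos hD, ← abs_mul, h₁]
    refine (abs_add_le _ _).trans_eq ?_
    rw [abs_mul, abs_mul, abs_of_nonneg hα, abs_of_nonneg (by linarith : (0 : ℝ) ≤ 104 * m)]
  have hy' : D * |y'| ≤ 140 * |x| + (64 * m ^ 2 + 112 * m) * |y| := by
    rw [← abs_of_pos hD, ← abs_mul, h₂]
    refine (abs_add_le _ _).trans_eq ?_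
    rw [abs_mul, abs_mul, abs_of_nonneg hβ]
    norm_num
  have hx'' : D * |x'| ≤ (64 * m ^ 2 + 136 * m - 130 + 208 / 5 * m) * ν := by
    nlinarith [mul_le_mul_of_nonneg_left hx hα,
      mul_le_mul_of_nonneg_left hy (by linarith : (0 : ℝ) ≤ 104 * m)]
  have hy'' : D * (5 / 2 * |y'|) ≤ (64 * m ^ 2 + 112 * m + 350) * ν := by
    nlinarith [mul_le_mul_of_nonneg_left hy hβ]
  rw [mul_max_of_nonneg _ _ (by linarith)]
  refine max_le (le_of_mul_le_mul_left ?_ hD) (le_of_mul_le_mul_left ?_ hD)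
  · nlinarith [mul_le_mul_of_nonneg_left hx'' (by linarith : (0 : ℝ) ≤ m + 1)]
  · nlinarith [mul_le_mul_of_nonneg_left hy'' (by linarith : (0 : ℝ) ≤ m + 1),
      mul_nonneg hν (by nlinarith : (0 : ℝ) ≤ 328 / 5 * m ^ 2 - 1894 / 5 * m - 1804 / 5)]

namespace ProfileRecurrence

variable {A : ℝ} {a b : ℕ → ℝ}

theorem det_mul_succ (h : ProfileRecurrence A a b) {m : ℕ} (hm : m ≠ 0) :
    (64 * (m : ℝ) ^ 2 + 248 * m + 108) * a (m + 1) =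
        (64 * (m : ℝ) ^ 2 + 136 * m - 130) * a m + 104 * m * b m ∧
      (64 * (m : ℝ) ^ 2 + 248 * m + 108) * b (m + 1) =
        -140 * a m + (64 * (m : ℝ) ^ 2 + 112 * m) * b m := by
  have e₁ := h.succ_fst m
  have e₂ := h.succ_snd m
  rw [if_neg hm] at e₂
  constructor
  · linear_combination (8 * (m : ℝ) + 17) * e₁ + 13 * e₂
  · linear_combination 10 * e₁ + (8 * (m : ℝ) + 14) * e₂

theorem summable_abs (h : ProfileRecurrence A a b) :
    Summable (fun k => |a k|) ∧ Summable (fun k => |b k|) := by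
  set ν : ℕ → ℝ := fun k => max |a k| (5 / 2 * |b k|)
  have hν : Summable ν := by
    refine summable_of_succ_mul_le_sub_mul (N := 7) (by norm_num : (1 : ℝ) < 11 / 10)
      (fun k => (abs_nonneg _).trans (le_max_left _ _)) fun m hm => ?_
    obtain ⟨h₁, h₂⟩ := h.det_mul_succ (m := m) (by omega)
    exact succ_mul_max_abs_le (by exact_mod_cast hm) h₁ h₂
  refine ⟨.of_nonneg_of_le (fun _ => abs_nonneg _) (fun k => le_max_left _ _) hν,
    .of_nonneg_of_le (fun _ => abs_nonneg _) (fun k => ?_) (hν.mul_left (2 / 5))⟩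
  linarith [le_max_right |a k| (5 / 2 * |b k|)]

theorem tsum_system (h : ProfileRecurrence A a b) {Ca Cb x : ℝ} (ha : ∀ k, |a k| ≤ Ca)
    (hb : ∀ k, |b k| ≤ Cb) (hx : |x| < 1) :
    8 * (1 - x) * ∑' k : ℕ, k * a k * x ^ k + 6 * ∑' k, a k * x ^ k
        - 13 * ∑' k, b k * x ^ k = 0 ∧
      8 * (1 - x) * ∑' k : ℕ, k * b k * x ^ k + 9 * ∑' k, b k * x ^ k
        - 10 * (1 - x) * ∑' k, a k * x ^ k - 10 * A * x = 0 := by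
  have sa := (summable_mul_pow_of_abs_le ha hx).hasSum
  have sb := (summable_mul_pow_of_abs_le hb hx).hasSum
  have sa₁ := (summable_natCast_mul_mul_pow_of_abs_le ha hx).hasSum
  have sb₁ := (summable_natCast_mul_mul_pow_of_abs_le hb hx).hasSum
  constructor
  · have := eq_add_mul_of_hasSum_mul_pow (p := fun k => (8 * k + 6) * a k - 13 * b k)
      (q := fun k => 8 * k * a k)
      ((((sa₁.mul_left 8).add (sa.mul_left 6)).sub (sb.mul_left 13)).congr_fun fun k => by ring)
      ((sa₁.mul_left 8).congr_fun fun k => by ring) (fun k => by push_cast; exact h.succ_fst k)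
    simp only [h.zero_fst, h.zero_snd] at this
    linear_combination this
  · have hA : HasSum (fun k : ℕ => (if k = 0 then 10 * A else 0) * x ^ k) (10 * A) := by
      simpa using hasSum_single 0
        (f := fun k : ℕ => (if k = 0 then 10 * A else 0) * x ^ k) (by simp_all)
    have := eq_add_mul_of_hasSum_mul_pow (p := fun k => (8 * k + 9) * b k - 10 * a k)
      (q := fun k => 8 * k * b k - 10 * a k + if k = 0 then 10 * A else 0)
      ((((sb₁.mul_left 8).add (sb.mul_left 9)).sub (sa.mul_left 10)).congr_fun fun k => by ring)
      ((((sb₁.mul_left 8).sub (sa.mul_left 10)).add hA).congr_fun fun k => by ring)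
      (fun k => by push_cast; linear_combination h.succ_snd k)
    simp only [h.zero_fst, h.zero_snd] at this
    linear_combination this

end ProfileRecurrence

theorem profile_series_solves_system
    (A : ℝ) (a b : ℕ → ℝ)
    (ha0 : a 0 = 0) (hb0 : b 0 = 0)
    (hb1 : b 1 = (35 / 27) * A) (ha1 : a 1 = (13 / 14) * b 1)
    (hrec : ∀ k, 2 ≤ k →
      ![a k, b k] = ((Mmat k)⁻¹ * Nmat k).mulVec ![a (k - 1), b (k - 1)]) :
    ∃ Γ₁ Γ₂ : ℝ → ℝ,
      (∀ γ : ℝ, 0 ≤ γ →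
        Summable (fun k : ℕ => |a k * (γ ^ 2 / (1 + γ ^ 2)) ^ k|) ∧
        Summable (fun k : ℕ => |b k * (γ ^ 2 / (1 + γ ^ 2)) ^ k|) ∧
        Γ₁ γ = ∑' k : ℕ, a k * (γ ^ 2 / (1 + γ ^ 2)) ^ k ∧
        Γ₂ γ = ∑' k : ℕ, b k * (γ ^ 2 / (1 + γ ^ 2)) ^ k) ∧
      TendstoUniformlyOn
        (fun n γ => ∑ k ∈ Finset.range n, a k * (γ ^ 2 / (1 + γ ^ 2)) ^ k)
        Γ₁ atTop (Ici 0) ∧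
      TendstoUniformlyOn
        (fun n γ => ∑ k ∈ Finset.range n, b k * (γ ^ 2 / (1 + γ ^ 2)) ^ k)
        Γ₂ atTop (Ici 0) ∧
      (∀ γ : ℝ, 0 < γ → ∃ d₁ d₂ : ℝ,
        HasDerivAt Γ₁ d₁ γ ∧ HasDerivAt Γ₂ d₂ γ ∧
        4 * γ * d₁ + 6 * Γ₁ γ - 13 * Γ₂ γ = 0 ∧
        4 * γ * d₂ + 9 * Γ₂ γ - (10 / (1 + γ ^ 2)) * (Γ₁ γ + γ ^ 2 * A) = 0) := by
  have h := ProfileRecurrence.of_mulVec ha0 hb0 hb1 ha1 hrec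
  obtain ⟨hsa, hsb⟩ := h.summable_abs
  have hX (γ : ℝ) : |γ ^ 2 / (1 + γ ^ 2)| ≤ 1 := (abs_sq_div_one_add_sq_lt_one γ).le
  refine ⟨fun γ => ∑' k, a k * (γ ^ 2 / (1 + γ ^ 2)) ^ k,
    fun γ => ∑' k, b k * (γ ^ 2 / (1 + γ ^ 2)) ^ k,
    fun γ _ => ⟨summable_abs_mul_pow hsa (hX γ), summable_abs_mul_pow hsb (hX γ), rfl, rfl⟩,
    tendstoUniformlyOn_sum_range_mul_pow hsa fun γ _ => hX γ,
    tendstoUniformlyOn_sum_range_mul_pow hsb fun γ _ => hX γ, fun γ _ => ?_⟩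
  have ha (k : ℕ) : |a k| ≤ ∑' j, |a j| := hsa.le_tsum k fun j _ => abs_nonneg _
  have hb (k : ℕ) : |b k| ≤ ∑' j, |b j| := hsb.le_tsum k fun j _ => abs_nonneg _
  have hx := abs_sq_div_one_add_sq_lt_one γ
  obtain ⟨e₁, e₂⟩ := h.tsum_system ha hb hx
  rw [← mul_tsum_mul_natCast_mul_pow_sub_one] at e₁ e₂
  have hd₁ := (hasDerivAt_tsum_mul_pow ha hx).comp γ (hasDerivAt_sq_div_one_add_sq γ)
  have hd₂ := (hasDerivAt_tsum_mul_pow hb hx).comp γ (hasDerivAt_sq_div_one_add_sq γ)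
  refine ⟨_, _, hd₁, hd₂, ?_, ?_⟩
  · linear_combination e₁ + (∑' k, a k * (k * (γ ^ 2 / (1 + γ ^ 2)) ^ (k - 1))) *
      four_mul_mul_deriv_sq_div_one_add_sq γ
  · linear_combination e₂ + (∑' k, b k * (k * (γ ^ 2 / (1 + γ ^ 2)) ^ (k - 1))) *
      four_mul_mul_deriv_sq_div_one_add_sq γ +
      10 * (∑' k, a k * (γ ^ 2 / (1 + γ ^ 2)) ^ k) * one_sub_sq_div_one_add_sq γ
end

section
/- Let a < b be positive reals and suppose Θ̄₁, Θ̄₂ : [0,∞) × (0,∞) → ℝ are C¹ solutions of the system ∂_t Θ̄₁ + 4γ∂_γ Θ̄₁ + 6Θ̄₁ − 13Θ̄₂ = 0 and ∂_t Θ̄₂ + 4γ∂_γ Θ̄₂ + 9Θ̄₂ − (10/(1+γ²))(Θ̄₁ + γ² A(t)) = 0 where A(t) = (2/π)∫₀^{π/2} Θ̄₁(t, tan θ) dθ, with Θ̄ᵢ(t,γ)/γ² integrable on (0,∞) together with its t-derivative, and with appropriate decay at γ = 0 and γ = ∞ (so that boundary terms vanish). Then the quantity I(t) := ∫₀^∞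 (Θ̄₁(t,γ) + Θ̄₂(t,γ)) γ^{-2} dγ is constant in t. -/
/-!
Dividing both equations by `γ²` and adding them, the time derivative of the density
`(Θ₁ + Θ₂)/γ²` equals
`-4 γ ∂_γ(Θ₁ + Θ₂)/γ² + 4 (Θ₁ + Θ₂)/γ² - 10 Θ₁/(1 + γ²) + 10 A/(1 + γ²)`.
Integrated over `(0, ∞)`, the first two terms cancel by the integration by parts, and the last
two cancel because the substitution `γ = tan θ` turns `A` into `(2/π) ∫ Θ₁/(1 + γ²)` while
`∫ 1/(1 + γ²) = π/2`. So the invariant has zero derivative on `[0, ∞)`.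
-/

open Real MeasureTheory Set intervalIntegral

lemma image_arctan_Ioi_zero : arctan '' Ioi 0 = Ioo 0 (π / 2) := by
  refine Subset.antisymm ?_ fun θ ⟨h₀, h₁⟩ => ⟨tan θ, tan_pos_of_pos_of_lt_pi_div_two h₀ h₁, ?_⟩
  · rintro _ ⟨γ, hγ, rfl⟩
    exact ⟨arctan_pos.2 hγ, arctan_lt_pi_div_two γ⟩
  · exact arctan_tan (by linarith [pi_pos]) h₁

lemma integral_comp_tan_eq_integral_Ioi {E : Type*} [NormedAddCommGroup E] [NormedSpace ℝ E]
    (F : ℝ → E) :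
    ∫ θ in (0 : ℝ)..(π / 2), F (tan θ) = ∫ γ in Ioi (0 : ℝ), (1 + γ ^ 2)⁻¹ • F γ := by
  have h := integral_image_eq_integral_abs_deriv_smul (measurableSet_Ioi (a := 0))
    (fun γ _ => (hasDerivAt_arctan' γ).hasDerivWithinAt) arctan_injective.injOn
    (fun θ => F (tan θ))
  rw [image_arctan_Ioi_zero] at h
  rw [integral_of_le (by positivity), integral_Ioc_eq_integral_Ioo, h]
  congr 1 with γ
  rw [abs_of_pos (by positivity), tan_arctan]

lemma eq_of_forall_hasDerivAt_zero {E : Type*} [NormedAddCommGroup E] [NormedSpace ℝ E]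
    {f : ℝ → E} {a t₁ t₂ : ℝ} (hf : ∀ t, a ≤ t → HasDerivAt f 0 t) (h₁ : a ≤ t₁) (h₂ : a ≤ t₂) :
    f t₁ = f t₂ := by
  have h_eq (t : ℝ) (ht : a ≤ t) : f t = f a :=
    constant_of_has_deriv_right_zero
      (fun x hx => (hf x hx.1).continuousAt.continuousWithinAt)
      (fun x hx => (hf x hx.1).hasDerivWithinAt) t ⟨ht, le_rfl⟩
  rw [h_eq t₁ h₁, h_eq t₂ h₂]

lemma MeasureTheory.IntegrableOn.inv_one_add_sq_mul {f : ℝ → ℝ} {s : Set ℝ}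
    (hf : IntegrableOn (fun γ => f γ / γ ^ 2) s) :
    IntegrableOn (fun γ => (1 + γ ^ 2)⁻¹ * f γ) s := by
  have hbdd : ∀ γ : ℝ, ‖γ ^ 2 / (1 + γ ^ 2)‖ ≤ 1 := fun γ => by
    rw [norm_of_nonneg (by positivity), div_le_one (by positivity)]
    linarith
  have hmeas : Measurable fun γ : ℝ => γ ^ 2 / (1 + γ ^ 2) := by fun_prop
  refine (hf.bdd_mul hmeas.aestronglyMeasurable (Filter.Eventually.of_forall hbdd)).congr ?_
  filter_upwards [ae_restrict_of_ae (volume.ae_ne 0)] with γ hγ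
  field_simp

lemma transport_div_sq_eq_of_pde {u v du dv gu gv γ a : ℝ} (hγ : γ ≠ 0)
    (h₁ : du + 4 * γ * gu + 6 * u - 13 * v = 0)
    (h₂ : dv + 4 * γ * gv + 9 * v - (10 / (1 + γ ^ 2)) * (u + γ ^ 2 * a) = 0) :
    4 * ((γ * gu + γ * gv) / γ ^ 2) =
      4 * ((u + v) / γ ^ 2) - (du + dv) / γ ^ 2 - 10 * ((1 + γ ^ 2)⁻¹ * u)
        + 10 * a * (1 + γ ^ 2)⁻¹ := by
  have hdu : du = -(4 * γ * gu) - 6 * u + 13 * v := by linarith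
  have hdv : dv = -(4 * γ * gv) - 9 * v + (10 / (1 + γ ^ 2)) * (u + γ ^ 2 * a) := by linarith
  rw [hdu, hdv]
  field_simp
  ring

lemma integral_timeDeriv_div_sq_eq_zero {u v du dv gu gv : ℝ → ℝ} {a : ℝ}
    (ha : a = (2 / π) * ∫ θ in (0 : ℝ)..(π / 2), u (tan θ))
    (h₁ : ∀ γ, 0 < γ → du γ + 4 * γ * gu γ + 6 * u γ - 13 * v γ = 0)
    (h₂ : ∀ γ, 0 < γ →
      dv γ + 4 * γ * gv γ + 9 * v γ - (10 / (1 + γ ^ 2)) * (u γ + γ ^ 2 * a) = 0)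
    (hu : IntegrableOn (fun γ => u γ / γ ^ 2) (Ioi 0))
    (hv : IntegrableOn (fun γ => v γ / γ ^ 2) (Ioi 0))
    (hdu : IntegrableOn (fun γ => du γ / γ ^ 2) (Ioi 0))
    (hdv : IntegrableOn (fun γ => dv γ / γ ^ 2) (Ioi 0))
    (hibp : ∫ γ in Ioi (0 : ℝ), (γ * gu γ + γ * gv γ) / γ ^ 2
      = ∫ γ in Ioi (0 : ℝ), (u γ + v γ) / γ ^ 2) :
    ∫ γ in Ioi (0 : ℝ), (du γ + dv γ) / γ ^ 2 = 0 := by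
  have hsum : IntegrableOn (fun γ => (u γ + v γ) / γ ^ 2) (Ioi 0) := by
    simp only [add_div]
    exact hu.add hv
  have hdsum : IntegrableOn (fun γ => (du γ + dv γ) / γ ^ 2) (Ioi 0) := by
    simp only [add_div]
    exact hdu.add hdv
  have hw : IntegrableOn (fun γ : ℝ => (1 + γ ^ 2)⁻¹) (Ioi 0) :=
    integrable_inv_one_add_sq.integrableOn
  have hwu := hu.inv_one_add_sq_mul
  have h_avg : a * (π / 2) = ∫ γ in Ioi (0 : ℝ), (1 + γ ^ 2)⁻¹ * u γ := by
    rw [ha, integral_comp_tan_eq_integral_Ioi, mul_right_comm,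
      show 2 / π * (π / 2) = 1 by field_simp [pi_pos.ne'], one_mul]
    rfl
  have h_lin :
      IntegrableOn (fun γ => 4 * ((u γ + v γ) / γ ^ 2) - (du γ + dv γ) / γ ^ 2) (Ioi 0) :=
    (hsum.const_mul 4).sub hdsum
  have h_lin' : IntegrableOn (fun γ => 4 * ((u γ + v γ) / γ ^ 2) - (du γ + dv γ) / γ ^ 2
      - 10 * ((1 + γ ^ 2)⁻¹ * u γ)) (Ioi 0) :=
    h_lin.sub (hwu.const_mul 10)
  -- The transport term is not known to be integrable, so it stays on the left: pulling out
  -- the constant `4` needs no integrability, unlike splitting the integral of a sum.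
  have h_split := calc
    4 * ∫ γ in Ioi (0 : ℝ), (γ * gu γ + γ * gv γ) / γ ^ 2
      = ∫ γ in Ioi (0 : ℝ), (4 * ((u γ + v γ) / γ ^ 2) - (du γ + dv γ) / γ ^ 2
          - 10 * ((1 + γ ^ 2)⁻¹ * u γ) + 10 * a * (1 + γ ^ 2)⁻¹) := by
        rw [← MeasureTheory.integral_const_mul]
        exact setIntegral_congr_fun measurableSet_Ioi fun γ hγ =>
          transport_div_sq_eq_of_pde (ne_of_gt hγ) (h₁ γ hγ) (h₂ γ hγ)
    _ = 4 * (∫ γ in Ioi (0 : ℝ), (u γ + v γ) / γ ^ 2)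
          - (∫ γ in Ioi (0 : ℝ), (du γ + dv γ) / γ ^ 2)
          - 10 * (∫ γ in Ioi (0 : ℝ), (1 + γ ^ 2)⁻¹ * u γ) + 10 * a * (π / 2) := by
        rw [integral_add h_lin' (hw.const_mul _), integral_sub h_lin (hwu.const_mul 10),
          integral_sub (hsum.const_mul 4) hdsum, MeasureTheory.integral_const_mul,
          MeasureTheory.integral_const_mul, MeasureTheory.integral_const_mul,
          integral_Ioi_inv_one_add_sq, arctan_zero, sub_zero]
  rw [hibp] at h_split
  linarith

theorem invariant_constant_general
    (Θ₁ Θ₂ dtΘ₁ dtΘ₂ dgΘ₁ dgΘ₂ : ℝ → ℝ → ℝ) (A : ℝ → ℝ)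
    -- the angular average
    (hA : ∀ t, A t = (2 / π) * ∫ θ in (0 : ℝ)..(π / 2), Θ₁ t (Real.tan θ))
    -- the PDE system
    (hpde1 : ∀ t γ, 0 ≤ t → 0 < γ →
      dtΘ₁ t γ + 4 * γ * dgΘ₁ t γ + 6 * Θ₁ t γ - 13 * Θ₂ t γ = 0)
    (hpde2 : ∀ t γ, 0 ≤ t → 0 < γ →
      dtΘ₂ t γ + 4 * γ * dgΘ₂ t γ + 9 * Θ₂ t γ
        - (10 / (1 + γ ^ 2)) * (Θ₁ t γ + γ ^ 2 * A t) = 0)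
    -- integrability of Θᵢ/γ² and of the time derivatives
    (hint : ∀ t, 0 ≤ t →
      IntegrableOn (fun γ => Θ₁ t γ / γ ^ 2) (Ioi 0) ∧
      IntegrableOn (fun γ => Θ₂ t γ / γ ^ 2) (Ioi 0) ∧
      IntegrableOn (fun γ => dtΘ₁ t γ / γ ^ 2) (Ioi 0) ∧
      IntegrableOn (fun γ => dtΘ₂ t γ / γ ^ 2) (Ioi 0))
    -- differentiation under the integral sign
    (hdiff : ∀ t, 0 ≤ t →
      HasDerivAt (fun s => ∫ γ in Ioi (0 : ℝ), (Θ₁ s γ + Θ₂ s γ) / γ ^ 2)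
        (∫ γ in Ioi (0 : ℝ), (dtΘ₁ t γ + dtΘ₂ t γ) / γ ^ 2) t)
    -- integration by parts with vanishing boundary terms (decay at 0 and ∞)
    (hibp : ∀ t, 0 ≤ t →
      (∫ γ in Ioi (0 : ℝ), (γ * dgΘ₁ t γ + γ * dgΘ₂ t γ) / γ ^ 2)
        = ∫ γ in Ioi (0 : ℝ), (Θ₁ t γ + Θ₂ t γ) / γ ^ 2) :
    ∀ t₁ t₂ : ℝ, 0 ≤ t₁ → 0 ≤ t₂ →
      (∫ γ in Ioi (0 : ℝ), (Θ₁ t₁ γ + Θ₂ t₁ γ) / γ ^ 2)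
        = ∫ γ in Ioi (0 : ℝ), (Θ₁ t₂ γ + Θ₂ t₂ γ) / γ ^ 2 := by
  intro t₁ t₂ h₁ h₂
  refine eq_of_forall_hasDerivAt_zero (fun t ht => (hdiff t ht).congr_deriv ?_) h₁ h₂
  obtain ⟨hu, hv, hdu, hdv⟩ := hint t ht
  exact integral_timeDeriv_div_sq_eq_zero (hA t) (fun γ => hpde1 t γ ht)
    (fun γ => hpde2 t γ ht) hu hv hdu hdv (hibp t ht)

theorem invariant_constant
    (Θ₁ Θ₂ dtΘ₁ dtΘ₂ dgΘ₁ dgΘ₂ : ℝ → ℝ → ℝ) (A : ℝ → ℝ)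
    -- C¹ regularity: time and space derivatives
    (hdt1 : ∀ t γ, 0 ≤ t → 0 < γ → HasDerivAt (fun s => Θ₁ s γ) (dtΘ₁ t γ) t)
    (hdt2 : ∀ t γ, 0 ≤ t → 0 < γ → HasDerivAt (fun s => Θ₂ s γ) (dtΘ₂ t γ) t)
    (hdg1 : ∀ t γ, 0 ≤ t → 0 < γ → HasDerivAt (fun x => Θ₁ t x) (dgΘ₁ t γ) γ)
    (hdg2 : ∀ t γ, 0 ≤ t → 0 < γ → HasDerivAt (fun x => Θ₂ t x) (dgΘ₂ t γ) γ)
    -- the angular average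
    (hA : ∀ t, A t = (2 / π) * ∫ θ in (0 : ℝ)..(π / 2), Θ₁ t (Real.tan θ))
    -- the PDE system
    (hpde1 : ∀ t γ, 0 ≤ t → 0 < γ →
      dtΘ₁ t γ + 4 * γ * dgΘ₁ t γ + 6 * Θ₁ t γ - 13 * Θ₂ t γ = 0)
    (hpde2 : ∀ t γ, 0 ≤ t → 0 < γ →
      dtΘ₂ t γ + 4 * γ * dgΘ₂ t γ + 9 * Θ₂ t γ
        - (10 / (1 + γ ^ 2)) * (Θ₁ t γ + γ ^ 2 * A t) = 0)
    -- integrability of Θᵢ/γ² and of the time derivatives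
    (hint : ∀ t, 0 ≤ t →
      IntegrableOn (fun γ => Θ₁ t γ / γ ^ 2) (Ioi 0) ∧
      IntegrableOn (fun γ => Θ₂ t γ / γ ^ 2) (Ioi 0) ∧
      IntegrableOn (fun γ => dtΘ₁ t γ / γ ^ 2) (Ioi 0) ∧
      IntegrableOn (fun γ => dtΘ₂ t γ / γ ^ 2) (Ioi 0))
    -- differentiation under the integral sign
    (hdiff : ∀ t, 0 ≤ t →
      HasDerivAt (fun s => ∫ γ in Ioi (0 : ℝ), (Θ₁ s γ + Θ₂ s γ) / γ ^ 2)
        (∫ γ in Ioi (0 : ℝ), (dtΘ₁ t γ + dtΘ₂ t γ) / γ ^ 2) t)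
    -- integration by parts with vanishing boundary terms (decay at 0 and ∞)
    (hibp : ∀ t, 0 ≤ t →
      (∫ γ in Ioi (0 : ℝ), (γ * dgΘ₁ t γ + γ * dgΘ₂ t γ) / γ ^ 2)
        = ∫ γ in Ioi (0 : ℝ), (Θ₁ t γ + Θ₂ t γ) / γ ^ 2) :
    ∀ t₁ t₂ : ℝ, 0 ≤ t₁ → 0 ≤ t₂ →
      (∫ γ in Ioi (0 : ℝ), (Θ₁ t₁ γ + Θ₂ t₁ γ) / γ ^ 2)
        = ∫ γ in Ioi (0 : ℝ), (Θ₁ t₂ γ + Θ₂ t₂ γ) / γ ^ 2 :=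
  invariant_constant_general Θ₁ Θ₂ dtΘ₁ dtΘ₂ dgΘ₁ dgΘ₂ A hA hpde1 hpde2 hint hdiff hibp
end
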